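/- arXiv:2312.08845 — 7 statements merged into one kernel-verified Lean document; each statement's English description precedes it below -/
import Mathlib

section
/- Let Rad be an irreducible root system in a finite-dimensional real inner product space V, and let f be an orthogonal linear automorphism of V with f(Rad) = Rad. If f commutes with the reflection s_α for every α ∈ Rad, then f = id_V or f = −id_V. (In particular, the center of the full automorphism group of an irreducible root system is {id, −id}.) -/
open scoped RealInnerProductSpace

namespace PaperRS

variable {V : Type*} [NormedAddCommGroup V] [InnerProductSpace ℝ V]

/-- The reflection in a root `α`. -/
noncomputable def reflRoot (α x : V) : V := x - (2 * ⟪x, α⟫ / ⟪α, α⟫) • α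

/-- `Rad` is a (reduced, crystallographic) root system in `V`. -/
structure IsRootSystem (Rad : Set V) : Prop where
  finite : Rad.Finite
  nonzero : ∀ α ∈ Rad, α ≠ 0
  spanning : Submodule.span ℝ Rad = ⊤
  integral : ∀ α ∈ Rad, ∀ β ∈ Rad, ∃ n : ℤ, 2 * ⟪β, α⟫ / ⟪α, α⟫ = (n : ℝ)
  reflMem : ∀ α ∈ Rad, ∀ β ∈ Rad, reflRoot α β ∈ Rad
  reduced : ∀ α ∈ Rad, ∀ c : ℝ, c • α ∈ Rad → c = 1 ∨ c = -1

/-- Irreducibility: `Rad` is not the union of two nonempty mutually orthogonal subsets. -/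
def IsIrreducible (Rad : Set V) : Prop :=
  ¬ ∃ R₁ R₂ : Set V, R₁.Nonempty ∧ R₂.Nonempty ∧ Rad = R₁ ∪ R₂ ∧
      ∀ α ∈ R₁, ∀ β ∈ R₂, ⟪α, β⟫ = 0

/-- An involution of the root system `Rad`: an orthogonal linear automorphism `t` of `V`
with `t(Rad) = Rad` and `t ∘ t = id`. -/
structure IsInvolution (Rad : Set V) (t : V ≃ₗᵢ[ℝ] V) : Prop where
  maps : (⇑t) '' Rad = Rad
  invol : ∀ x : V, t (t x) = x

/-- Two roots are strongly orthogonal if neither their sum nor their difference is a root. -/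
def StronglyOrthogonal (Rad : Set V) (α β : V) : Prop :=
  α ≠ β ∧ α ≠ -β ∧ α + β ∉ Rad ∧ α - β ∉ Rad

/-- A vector is regular for `Rad` if it is orthogonal to no root. -/
def IsRegular (Rad : Set V) (v : V) : Prop := ∀ α ∈ Rad, ⟪α, v⟫ ≠ 0

/-- The positive roots determined by a regular vector `v`. -/
def posRoots (Rad : Set V) (v : V) : Set V := {α ∈ Rad | 0 < ⟪α, v⟫}

/-- The base of simple roots determined by a regular vector `v`: the positive roots which
are not sums of two positive roots. -/
def simpleBase (Rad : Set V) (v : V) : Set V :=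
  {α ∈ posRoots Rad v | ¬ ∃ β ∈ posRoots Rad v, ∃ γ ∈ posRoots Rad v, α = β + γ}

/-- A regular vector `v` is an S-chamber vector for an involution `t` if
`(α,v)·(t α,v) > 0` for every complex root `α` (i.e. every root with `t α ≠ ±α`). -/
def IsSChamber (Rad : Set V) (t : V ≃ₗᵢ[ℝ] V) (v : V) : Prop :=
  IsRegular Rad v ∧
    ∀ α ∈ Rad, t α ≠ α → t α ≠ -α → 0 < ⟪α, v⟫ * ⟪t α, v⟫

/-- `P ⊆ Rad` is parabolic if `P ∪ (-P) = Rad` and `P` is closed under root addition. -/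
def IsParabolic (Rad P : Set V) : Prop :=
  P ⊆ Rad ∧ (∀ α ∈ Rad, α ∈ P ∨ -α ∈ P) ∧
    ∀ α ∈ P, ∀ β ∈ P, α + β ∈ Rad → α + β ∈ P

/-- Composition `s_{β 0} ∘ s_{β 1} ∘ ⋯ ∘ s_{β (r-1)}` of the reflections in the roots
`β 0, …, β (r-1)`. -/
noncomputable def reflComp : (r : ℕ) → (Fin r → V) → V → V
  | 0, _ => id
  | r + 1, β => reflRoot (β 0) ∘ reflComp r (fun i => β i.succ)

/-- the center of the full automorphism group of an irreducible root
system is `{id, -id}`. -/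
theorem stmt0 {V : Type*} [NormedAddCommGroup V] [InnerProductSpace ℝ V]
    [FiniteDimensional ℝ V] (Rad : Set V) (hRS : IsRootSystem Rad)
    (hirr : IsIrreducible Rad) (f : V ≃ₗᵢ[ℝ] V) (hf : (⇑f) '' Rad = Rad)
    (hcomm : ∀ α ∈ Rad, ∀ x : V, f (reflRoot α x) = reflRoot α (f x)) :
    (∀ x : V, f x = x) ∨ (∀ x : V, f x = -x) := by
  have key : ∀ α ∈ Rad, f α = α ∨ f α = -α := by
    intro α hα
    have hα0 : α ≠ 0 := hRS.nonzero α hα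
    have hαα : ⟪α, α⟫ ≠ 0 := inner_self_ne_zero.mpr hα0
    have hc := hcomm α hα α
    have h1 : reflRoot α α = -α := by
      unfold reflRoot
      rw [mul_div_assoc, div_self hαα, mul_one, two_smul]
      abel
    rw [h1, map_neg] at hc
    set c : ℝ := 2 * ⟪f α, α⟫ / ⟪α, α⟫ with hcdef
    have hc' : -(f α) = f α - c • α := hc
    have h2 : f α = (c / 2) • α := by
      have h3 : (2:ℝ) • f α = c • α := by
        have := hc'
        linear_combination (norm := module) -this
      have h4 := congrArg (fun y => (2:ℝ)⁻¹ • y) h3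
      simpa [smul_smul, div_eq_inv_mul] using h4
    have hmem : (c / 2) • α ∈ Rad := by
      rw [← h2, ← hf]; exact ⟨α, hα, rfl⟩
    rcases hRS.reduced α hα (c / 2) hmem with h | h
    · left; rw [h2, h, one_smul]
    · right; rw [h2, h, neg_one_smul]
  by_cases hall : ∀ α ∈ Rad, f α = α
  · left
    intro x
    have hx : x ∈ Submodule.span ℝ Rad := hRS.spanning ▸ Submodule.mem_top
    induction hx using Submodule.span_induction with
    | mem y hy => exact hall y hy
    | zero => simp
    | add a b _ _ ha hb => simp [map_add, ha, hb]
    | smul c a _ ha => simp [map_smul, ha]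
  · by_cases hall2 : ∀ α ∈ Rad, f α = -α
    · right
      intro x
      have hx : x ∈ Submodule.span ℝ Rad := hRS.spanning ▸ Submodule.mem_top
      induction hx using Submodule.span_induction with
      | mem y hy => exact hall2 y hy
      | zero => simp
      | add a b _ _ ha hb => simp [map_add, ha, hb]; abel
      | smul c a _ ha => simp [map_smul, ha]
    · exfalso
      push_neg at hall hall2
      obtain ⟨α, hα, hαne⟩ := hall
      obtain ⟨β, hβ, hβne⟩ := hall2
      apply hirr
      refine ⟨{γ ∈ Rad | f γ = γ}, {γ ∈ Rad | f γ = -γ}, ⟨β, hβ, ?_⟩, ⟨α, hα, ?_⟩, ?_, ?_⟩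
      · rcases key β hβ with h | h
        · exact h
        · exact absurd h hβne
      · rcases key α hα with h | h
        · exact absurd h hαne
        · exact h
      · ext γ
        constructor
        · intro hγ
          rcases key γ hγ with h | h
          · exact Or.inl ⟨hγ, h⟩
          · exact Or.inr ⟨hγ, h⟩
        · rintro (⟨hγ, -⟩ | ⟨hγ, -⟩) <;> exact hγ
      · rintro γ ⟨-, hγ1⟩ δ ⟨-, hδ1⟩
        have := f.inner_map_map γ δ
        rw [hγ1, hδ1, inner_neg_right] at this
        linarith


end PaperRS
end

section
/- Let Rad be a root system in a finite-dimensional real inner product space V. If α₁, …, α_r are pairwise orthogonal roots of Rad, then there exist pairwise strongly orthogonal roots β₁, …, β_r of Rad such that the real span of {α₁, …, α_r} equals the real span of {β₁, …, β_r}. -/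
/-!
Among the families of pairwise orthogonal roots spanning the given subspace (there are finitely
many) take one maximising `∑ ‖β k‖²`. For orthogonal roots `a`, `b` with `a + b` a root, the
reflection in `b` shows that `a - b` is a root as well, and the Cartan integer of `a` against
`a + b` equals `2‖a‖² / (‖a‖² + ‖b‖²)`, hence is `1`, so `‖a‖ = ‖b‖`. Replacing `(β i, β j)` by
`(β i + β j, β i - β j)` would then give another such family with larger `∑ ‖β k‖²`. Since
`a + b` is a root iff `a - b = a + (-b)` is, a maximiser consists of strongly orthogonal roots.
-/

open scoped RealInnerProductSpace

namespace PaperRS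

variable {V : Type*} [NormedAddCommGroup V] [InnerProductSpace ℝ V]

namespace IsRootSystem

variable {Rad : Set V} {a b : V}

lemma neg_mem (hRS : IsRootSystem Rad) (ha : a ∈ Rad) : -a ∈ Rad := by
  have hself : ⟪a, a⟫ ≠ 0 := inner_self_ne_zero.2 (hRS.nonzero a ha)
  have hrefl : reflRoot a a = -a := by
    rw [reflRoot, mul_div_assoc, div_self hself, mul_one, two_smul]
    abel
  simpa [hrefl] using hRS.reflMem a ha a ha

lemma sub_mem_of_add_mem (hRS : IsRootSystem Rad) (hb : b ∈ Rad) (horth : ⟪a, b⟫ = 0)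
    (hab : a + b ∈ Rad) : a - b ∈ Rad := by
  have hself : ⟪b, b⟫ ≠ 0 := inner_self_ne_zero.2 (hRS.nonzero b hb)
  have hrefl : reflRoot b (a + b) = a - b := by
    rw [reflRoot, inner_add_left, horth, zero_add, mul_div_assoc, div_self hself, mul_one,
      two_smul]
    abel
  simpa [hrefl] using hRS.reflMem b hb (a + b) hab

lemma add_mem_iff_sub_mem (hRS : IsRootSystem Rad) (hb : b ∈ Rad) (horth : ⟪a, b⟫ = 0) :
    a + b ∈ Rad ↔ a - b ∈ Rad := by
  refine ⟨hRS.sub_mem_of_add_mem hb horth, fun hab => ?_⟩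
  have horth' : ⟪a, -b⟫ = 0 := by rw [inner_neg_right, horth, neg_zero]
  simpa using hRS.sub_mem_of_add_mem (hRS.neg_mem hb) horth' (by simpa [← sub_eq_add_neg])

lemma norm_eq_of_add_mem (hRS : IsRootSystem Rad) (ha : a ∈ Rad) (hb : b ∈ Rad)
    (horth : ⟪a, b⟫ = 0) (hab : a + b ∈ Rad) : ‖a‖ = ‖b‖ := by
  obtain ⟨n, hn⟩ := hRS.integral (a + b) hab a ha
  have hA : 0 < ‖a‖ ^ 2 := by have := norm_pos_iff.2 (hRS.nonzero a ha); positivity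
  have hB : 0 < ‖b‖ ^ 2 := by have := norm_pos_iff.2 (hRS.nonzero b hb); positivity
  have hnum : ⟪a, a + b⟫ = ‖a‖ ^ 2 := by
    rw [inner_add_right, horth, add_zero, real_inner_self_eq_norm_sq]
  have hden : ⟪a + b, a + b⟫ = ‖a‖ ^ 2 + ‖b‖ ^ 2 := by
    rw [real_inner_self_eq_norm_sq, sq, sq, sq, norm_add_sq_eq_norm_sq_add_norm_sq_real horth]
  rw [hnum, hden, div_eq_iff (by positivity)] at hn
  have hn1 : n = 1 := by
    have h0 : (0 : ℝ) < n := by nlinarith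
    have h2 : (n : ℝ) < 2 := by nlinarith
    have : (0 : ℤ) < n ∧ n < 2 := ⟨by exact_mod_cast h0, by exact_mod_cast h2⟩
    omega
  subst hn1
  push_cast at hn
  exact (pow_left_inj₀ (norm_nonneg a) (norm_nonneg b) two_ne_zero).1 (by linarith)

lemma stronglyOrthogonal_of_add_notMem (hRS : IsRootSystem Rad) (hb : b ∈ Rad)
    (horth : ⟪a, b⟫ = 0) (hab : a + b ∉ Rad) : StronglyOrthogonal Rad a b := by
  have hb0 : ⟪b, b⟫ ≠ 0 := inner_self_ne_zero.2 (hRS.nonzero b hb)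
  refine ⟨?_, ?_, hab, fun h => hab ((hRS.add_mem_iff_sub_mem hb horth).2 h)⟩
  · rintro rfl
    exact hb0 horth
  · rintro rfl
    exact hb0 (by simpa using horth)

end IsRootSystem

section Rotation

variable {ι M : Type*} [DecidableEq ι] [AddCommGroup M]

def rotatePair (b : ι → M) (i j : ι) : ι → M :=
  Function.update (Function.update b i (b i + b j)) j (b i - b j)

lemma rotatePair_apply_left (b : ι → M) {i j : ι} (hij : i ≠ j) :
    rotatePair b i j i = b i + b j := by
  simp [rotatePair, hij]

lemma rotatePair_apply_right (b : ι → M) (i j : ι) : rotatePair b i j j = b i - b j := by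
  simp [rotatePair]

lemma rotatePair_apply_of_ne (b : ι → M) {i j k : ι} (hki : k ≠ i) (hkj : k ≠ j) :
    rotatePair b i j k = b k := by
  simp [rotatePair, hki, hkj]

lemma span_range_rotatePair [Module ℝ M] (b : ι → M) {i j : ι} (hij : i ≠ j) :
    Submodule.span ℝ (Set.range (rotatePair b i j)) = Submodule.span ℝ (Set.range b) := by
  set S := Submodule.span ℝ (Set.range b)
  set S' := Submodule.span ℝ (Set.range (rotatePair b i j))
  have mem : ∀ k, b k ∈ S := fun k => Submodule.subset_span ⟨k, rfl⟩
  have mem' : ∀ k, rotatePair b i j k ∈ S' := fun k => Submodule.subset_span ⟨k, rfl⟩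
  apply le_antisymm <;> rw [Submodule.span_le, Set.range_subset_iff] <;> intro k
  · by_cases hki : k = i
    · subst hki; rw [rotatePair_apply_left b hij]; exact S.add_mem (mem k) (mem j)
    by_cases hkj : k = j
    · subst hkj; rw [rotatePair_apply_right]; exact S.sub_mem (mem i) (mem k)
    rw [rotatePair_apply_of_ne b hki hkj]; exact mem k
  · have hi := mem' i
    have hj := mem' j
    rw [rotatePair_apply_left b hij] at hi
    rw [rotatePair_apply_right] at hj
    by_cases hki : k = i
    · subst hki
      have : b k = (2⁻¹ : ℝ) • ((b k + b j) + (b k - b j)) := by module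
      exact this ▸ S'.smul_mem _ (S'.add_mem hi hj)
    by_cases hkj : k = j
    · subst hkj
      have : b k = (2⁻¹ : ℝ) • ((b i + b k) - (b i - b k)) := by module
      exact this ▸ S'.smul_mem _ (S'.sub_mem hi hj)
    rw [← rotatePair_apply_of_ne b hki hkj]; exact mem' k

lemma pairwise_inner_rotatePair {b : ι → V} (hb : Pairwise fun k l => ⟪b k, b l⟫ = 0)
    {i j : ι} (hnorm : ‖b i‖ = ‖b j‖) :
    Pairwise fun k l => ⟪rotatePair b i j k, rotatePair b i j l⟫ = 0 := by
  have hb' : ∀ k l, k ≠ l → ⟪b k, b l⟫ = 0 := hb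
  have hsum : ⟪b i + b j, b i - b j⟫ = 0 := (real_inner_add_sub_eq_zero_iff _ _).2 hnorm
  intro k l hkl
  simp only [rotatePair, Function.update_apply]
  split_ifs <;>
    grind [inner_add_left, inner_sub_left, inner_add_right, inner_sub_right, real_inner_comm]

lemma sum_norm_sq_rotatePair [Fintype ι] {b : ι → V} {i j : ι} (hij : i ≠ j)
    (horth : ⟪b i, b j⟫ = 0) :
    ∑ k, ‖rotatePair b i j k‖ ^ 2 = ∑ k, ‖b k‖ ^ 2 + (‖b i‖ ^ 2 + ‖b j‖ ^ 2) := by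
  have hdiff : ∑ k, (‖rotatePair b i j k‖ ^ 2 - ‖b k‖ ^ 2) = ‖b i‖ ^ 2 + ‖b j‖ ^ 2 := by
    rw [Fintype.sum_eq_add i j hij, rotatePair_apply_left b hij, rotatePair_apply_right,
      norm_add_sq_real, norm_sub_sq_real, horth]
    · ring
    · rintro k ⟨hki, hkj⟩
      rw [rotatePair_apply_of_ne b hki hkj, sub_self]
  rw [← hdiff, Finset.sum_sub_distrib]
  ring

lemma IsRootSystem.rotatePair_mem {Rad : Set V} (hRS : IsRootSystem Rad) {b : ι → V}
    (hb : ∀ k, b k ∈ Rad) {i j : ι} (horth : ⟪b i, b j⟫ = 0) (hsum : b i + b j ∈ Rad) (k : ι) :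
    rotatePair b i j k ∈ Rad := by
  simp only [rotatePair, Function.update_apply]
  split_ifs
  exacts [hRS.sub_mem_of_add_mem (hb j) horth hsum, hsum, hb k]

end Rotation

theorem stmt1_general {V : Type*} [NormedAddCommGroup V] [InnerProductSpace ℝ V]
    (Rad : Set V) (hRS : IsRootSystem Rad)
    (r : ℕ) (α : Fin r → V) (hmem : ∀ i, α i ∈ Rad)
    (horth : ∀ i j, i ≠ j → ⟪α i, α j⟫ = 0) :
    ∃ β : Fin r → V, (∀ i, β i ∈ Rad) ∧
      (∀ i j, i ≠ j → StronglyOrthogonal Rad (β i) (β j)) ∧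
      Submodule.span ℝ (Set.range α) = Submodule.span ℝ (Set.range β) := by
  let S : Set (Fin r → V) := {b | (∀ i, b i ∈ Rad) ∧ (Pairwise fun i j => ⟪b i, b j⟫ = 0) ∧
      Submodule.span ℝ (Set.range b) = Submodule.span ℝ (Set.range α)}
  have hS : S.Finite :=
    (Set.Finite.pi fun _ => hRS.finite).subset fun b hb i _ => hb.1 i
  obtain ⟨β, ⟨hβmem, hβorth, hβspan⟩, hβmax⟩ :=
    Set.exists_max_image S (fun b => ∑ k, ‖b k‖ ^ 2) hS ⟨α, hmem, horth, rfl⟩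
  refine ⟨β, hβmem, fun i j hij => ?_, hβspan.symm⟩
  refine hRS.stronglyOrthogonal_of_add_notMem (hβmem j) (hβorth hij) fun hsum => ?_
  have hrot : rotatePair β i j ∈ S :=
    ⟨hRS.rotatePair_mem hβmem (hβorth hij) hsum,
      pairwise_inner_rotatePair hβorth
        (hRS.norm_eq_of_add_mem (hβmem i) (hβmem j) (hβorth hij) hsum),
      (span_range_rotatePair β hij).trans hβspan⟩
  have hgrow := hβmax _ hrot
  rw [sum_norm_sq_rotatePair hij (hβorth hij)] at hgrow
  have hpos : 0 < ‖β i‖ ^ 2 := pow_pos (norm_pos_iff.2 (hRS.nonzero _ (hβmem i))) 2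
  linarith [sq_nonneg ‖β j‖]

/-- every set of pairwise orthogonal roots spans the same subspace as some
set of pairwise strongly orthogonal roots. -/
theorem stmt1 {V : Type*} [NormedAddCommGroup V] [InnerProductSpace ℝ V]
    [FiniteDimensional ℝ V] (Rad : Set V) (hRS : IsRootSystem Rad)
    (r : ℕ) (α : Fin r → V) (hmem : ∀ i, α i ∈ Rad)
    (horth : ∀ i j, i ≠ j → ⟪α i, α j⟫ = 0) :
    ∃ β : Fin r → V, (∀ i, β i ∈ Rad) ∧
      (∀ i j, i ≠ j → StronglyOrthogonal Rad (β i) (β j)) ∧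
      Submodule.span ℝ (Set.range α) = Submodule.span ℝ (Set.range β) :=
  stmt1_general Rad hRS r α hmem horth

end PaperRS
end

section
/- Let Rad be a root system in a finite-dimensional real inner product space V and let t be an involution of Rad. Then there exist a special involution ε of Rad and pairwise strongly orthogonal roots β₁, …, β_r ∈ Rad (possibly r = 0) with ε(β_i) = β_i and t(β_i) = −β_i for all i, such that t = ε ∘ s_{β₁} ∘ ⋯ ∘ s_{β_r}. -/
open scoped RealInnerProductSpace

namespace PaperRS

variable {V : Type*} [NormedAddCommGroup V] [InnerProductSpace ℝ V]

/-! Call a root imaginary for `t` if `t` negates it, so that `t` is special when it has no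
imaginary roots. We induct on their number. If `β` is an imaginary root of maximal length,
then `t` commutes with `s_β`, and the imaginary roots of the involution `t ∘ s_β` are the
imaginary roots of `t` orthogonal to `β`; in particular `β` is no longer one of them. By
maximality, `β` is strongly orthogonal to each of them: for such `α`, `β ± α` would be an
imaginary root longer than `β`. So a factorization of `t ∘ s_β` extends to one of `t` by
appending `β`. -/

lemma reflRoot_of_inner_eq_zero {β x : V} (h : ⟪x, β⟫ = 0) : reflRoot β x = x := by
  simp [reflRoot, h]

lemma reflRoot_self {β : V} (hβ : β ≠ 0) : reflRoot β β = -β := by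
  rw [reflRoot, mul_div_assoc, div_self (inner_self_ne_zero.mpr hβ)]
  module

lemma reflRoot_neg (β x : V) : reflRoot (-β) x = reflRoot β x := by
  rw [reflRoot, reflRoot, inner_neg_right, inner_neg_neg]
  module

lemma inner_reflRoot_self (β x : V) : ⟪reflRoot β x, β⟫ = -⟪x, β⟫ := by
  rcases eq_or_ne β 0 with rfl | hβ
  · simp
  rw [reflRoot, inner_sub_left, inner_smul_left, RCLike.conj_to_real,
    div_mul_cancel₀ _ (inner_self_ne_zero.mpr hβ)]
  ring

lemma map_reflRoot (t : V ≃ₗᵢ[ℝ] V) (β x : V) : t (reflRoot β x) = reflRoot (t β) (t x) := by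
  simp [reflRoot, LinearIsometryEquiv.inner_map_map]

lemma reflRoot_comm {α β : V} (h : ⟪α, β⟫ = 0) (x : V) :
    reflRoot α (reflRoot β x) = reflRoot β (reflRoot α x) := by
  simp only [reflRoot, inner_sub_left, inner_smul_left, h, real_inner_comm α β,
    RCLike.conj_to_real, mul_zero, sub_zero]
  module

lemma reflection_orthogonal_span_singleton_apply (β x : V) :
    (ℝ ∙ β)ᗮ.reflection x = reflRoot β x := by
  rw [Submodule.reflection_orthogonal_apply, Submodule.reflection_singleton_apply, reflRoot,
    real_inner_comm β x, real_inner_self_eq_norm_sq]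
  simp only [RCLike.ofReal_real_eq_id, id_eq]
  module

lemma reflComp_cons {r : ℕ} (β : V) (b : Fin r → V) (x : V) :
    reflComp (r + 1) (Fin.cons β b) x = reflRoot β (reflComp r b x) := rfl

lemma reflComp_of_inner_eq_zero {r : ℕ} {b : Fin r → V} {x : V} (h : ∀ i, ⟪x, b i⟫ = 0) :
    reflComp r b x = x := by
  induction r with
  | zero => rfl
  | succ r ih =>
    change reflRoot (b 0) (reflComp r (fun i => b i.succ) x) = x
    rw [ih fun i => h i.succ, reflRoot_of_inner_eq_zero (h 0)]

lemma reflComp_reflRoot {r : ℕ} {b : Fin r → V} {β : V} (h : ∀ i, ⟪b i, β⟫ = 0) (x : V) :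
    reflComp r b (reflRoot β x) = reflRoot β (reflComp r b x) := by
  induction r with
  | zero => rfl
  | succ r ih =>
    change reflRoot (b 0) (reflComp r (fun i => b i.succ) _) = _
    rw [ih fun i => h i.succ, reflRoot_comm (h 0)]
    rfl

section RootSystem

variable {Rad : Set V}

lemma IsRootSystem.neg_mem_s3 (hRS : IsRootSystem Rad) {α : V} (hα : α ∈ Rad) : -α ∈ Rad := by
  simpa [reflRoot_self (hRS.nonzero α hα)] using hRS.reflMem α hα α hα

lemma isInvolution_reflection (hRS : IsRootSystem Rad) {β : V} (hβ : β ∈ Rad) :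
    IsInvolution Rad (ℝ ∙ β)ᗮ.reflection where
  maps := by
    have hmem : ∀ α ∈ Rad, (ℝ ∙ β)ᗮ.reflection α ∈ Rad := fun α hα => by
      rw [reflection_orthogonal_span_singleton_apply]
      exact hRS.reflMem β hβ α hα
    refine (Set.image_subset_iff.mpr hmem).antisymm fun α hα => ⟨_, hmem α hα, ?_⟩
    exact Submodule.reflection_reflection _ α
  invol := Submodule.reflection_reflection _

lemma IsInvolution.trans {s t : V ≃ₗᵢ[ℝ] V} (hs : IsInvolution Rad s) (ht : IsInvolution Rad t)
    (hst : ∀ x, t (s x) = s (t x)) : IsInvolution Rad (s.trans t) where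
  maps := by
    rw [LinearIsometryEquiv.coe_trans, Set.image_comp, hs.maps, ht.maps]
  invol x := by
    change t (s (t (s x))) = x
    rw [← hst, ht.invol, hs.invol]

lemma StronglyOrthogonal.symm (hRS : IsRootSystem Rad) {α β : V}
    (h : StronglyOrthogonal Rad α β) : StronglyOrthogonal Rad β α := by
  obtain ⟨hne, hne_neg, hadd, hsub⟩ := h
  refine ⟨hne.symm, fun h => hne_neg (by rw [h, neg_neg]), by rwa [add_comm], fun hmem => ?_⟩
  exact hsub (by simpa using hRS.neg_mem_s3 hmem)

def imaginaryRoots (Rad : Set V) (t : V ≃ₗᵢ[ℝ] V) : Set V := {α ∈ Rad | t α = -α}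

lemma IsRootSystem.neg_mem_imaginaryRoots (hRS : IsRootSystem Rad) {t : V ≃ₗᵢ[ℝ] V} {α : V}
    (hα : α ∈ imaginaryRoots Rad t) : -α ∈ imaginaryRoots Rad t :=
  ⟨hRS.neg_mem_s3 hα.1, by rw [map_neg, hα.2]⟩

lemma imaginaryRoots_reflection_trans_subset {t : V ≃ₗᵢ[ℝ] V} {β : V} (htβ : t β = -β) :
    imaginaryRoots Rad ((ℝ ∙ β)ᗮ.reflection.trans t) ⊆
      {α ∈ imaginaryRoots Rad t | ⟪α, β⟫ = 0} := by
  rintro α ⟨hα, htsα⟩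
  change t ((ℝ ∙ β)ᗮ.reflection α) = -α at htsα
  rw [reflection_orthogonal_span_singleton_apply] at htsα
  -- `t` preserves inner products while `s_β` negates them against `β`.
  have hαβ : ⟪α, β⟫ = 0 := by
    have h := t.inner_map_map (reflRoot β α) β
    rw [htsα, htβ, inner_neg_neg, inner_reflRoot_self] at h
    linarith
  rw [reflRoot_of_inner_eq_zero hαβ] at htsα
  exact ⟨⟨hα, htsα⟩, hαβ⟩

lemma stronglyOrthogonal_of_norm_le (hRS : IsRootSystem Rad) {t : V ≃ₗᵢ[ℝ] V} {α β : V}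
    (hβ : β ∈ imaginaryRoots Rad t) (hmax : ∀ γ ∈ imaginaryRoots Rad t, ‖γ‖ ≤ ‖β‖)
    (hα : α ∈ imaginaryRoots Rad t) (hαβ : ⟪α, β⟫ = 0) : StronglyOrthogonal Rad β α := by
  have hβ0 : ⟪β, β⟫ ≠ 0 := inner_self_ne_zero.mpr (hRS.nonzero β hβ.1)
  have hadd : ∀ γ ∈ imaginaryRoots Rad t, ⟪γ, β⟫ = 0 → β + γ ∉ Rad := by
    intro γ hγ hγβ hmem
    have hlt : ‖β‖ * ‖β‖ < ‖β + γ‖ * ‖β + γ‖ := by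
      rw [norm_add_sq_eq_norm_sq_add_norm_sq_real (by rwa [real_inner_comm]),
        lt_add_iff_pos_right, mul_self_pos, norm_ne_zero_iff]
      exact hRS.nonzero γ hγ.1
    have hle := hmax (β + γ) ⟨hmem, by rw [map_add, hβ.2, hγ.2, neg_add]⟩
    exact hlt.not_ge (mul_self_le_mul_self (norm_nonneg _) hle)
  refine ⟨?_, ?_, hadd α hα hαβ, ?_⟩
  · rintro rfl
    exact hβ0 hαβ
  · rintro rfl
    exact hβ0 (by simpa using hαβ)
  · simpa [sub_eq_add_neg] using hadd (-α) (hRS.neg_mem_imaginaryRoots hα) (by simp [hαβ])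

structure IsSpecialFactorization (Rad : Set V) (t ε : V ≃ₗᵢ[ℝ] V) {r : ℕ} (β : Fin r → V) :
    Prop where
  isInvolution : IsInvolution Rad ε
  special : ∀ α ∈ Rad, ε α ≠ -α
  mem : ∀ i, β i ∈ Rad
  stronglyOrthogonal : ∀ i j, i ≠ j → StronglyOrthogonal Rad (β i) (β j)
  fixed : ∀ i, ε (β i) = β i
  negated : ∀ i, t (β i) = -(β i)
  eq_comp : ∀ x, t x = ε (reflComp r β x)

lemma isSpecialFactorization_of_imaginaryRoots_eq_empty {t : V ≃ₗᵢ[ℝ] V}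
    (ht : IsInvolution Rad t) (hspecial : imaginaryRoots Rad t = ∅) :
    IsSpecialFactorization Rad t t (Fin.elim0 : Fin 0 → V) where
  isInvolution := ht
  special _ hα hneg := hspecial.subset ⟨hα, hneg⟩
  mem i := i.elim0
  stronglyOrthogonal i := i.elim0
  fixed i := i.elim0
  negated i := i.elim0
  eq_comp _ := rfl

lemma IsSpecialFactorization.cons (hRS : IsRootSystem Rad) {t ε : V ≃ₗᵢ[ℝ] V} {r : ℕ}
    {b : Fin r → V} {β : V} (hβ : β ∈ imaginaryRoots Rad t)
    (hmax : ∀ γ ∈ imaginaryRoots Rad t, ‖γ‖ ≤ ‖β‖)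
    (h : IsSpecialFactorization Rad ((ℝ ∙ β)ᗮ.reflection.trans t) ε b) :
    IsSpecialFactorization Rad t ε (Fin.cons β b) := by
  have hb : ∀ i, b i ∈ imaginaryRoots Rad t ∧ ⟪b i, β⟫ = 0 := fun i =>
    imaginaryRoots_reflection_trans_subset hβ.2 ⟨h.mem i, h.negated i⟩
  have hso : ∀ i, StronglyOrthogonal Rad β (b i) := fun i =>
    stronglyOrthogonal_of_norm_le hRS hβ hmax (hb i).1 (hb i).2
  have hs : ∀ x, (ℝ ∙ β)ᗮ.reflection x = reflRoot β x :=
    reflection_orthogonal_span_singleton_apply β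
  have hεβ : ε β = β := by
    have h' := h.eq_comp β
    rw [reflComp_of_inner_eq_zero fun i => by rw [real_inner_comm]; exact (hb i).2] at h'
    rw [← h']
    change t ((ℝ ∙ β)ᗮ.reflection β) = β
    rw [hs, reflRoot_self (hRS.nonzero β hβ.1), map_neg, hβ.2, neg_neg]
  refine ⟨h.isInvolution, h.special, Fin.cases hβ.1 h.mem, ?_, Fin.cases hεβ h.fixed,
    Fin.cases hβ.2 fun i => (hb i).1.2, fun x => ?_⟩
  · intro i j hij
    induction i using Fin.cases <;> induction j using Fin.cases
    · exact absurd rfl hij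
    · exact hso _
    · exact (hso _).symm hRS
    · exact h.stronglyOrthogonal _ _ (ne_of_apply_ne Fin.succ hij)
  · have h' := h.eq_comp ((ℝ ∙ β)ᗮ.reflection x)
    rw [LinearIsometryEquiv.trans_apply, Submodule.reflection_reflection, hs,
      reflComp_reflRoot fun i => (hb i).2] at h'
    rwa [reflComp_cons]

theorem exists_isSpecialFactorization (hRS : IsRootSystem Rad) {t : V ≃ₗᵢ[ℝ] V}
    (ht : IsInvolution Rad t) :
    ∃ (ε : V ≃ₗᵢ[ℝ] V) (r : ℕ) (β : Fin r → V), IsSpecialFactorization Rad t ε β := by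
  induction hn : (imaginaryRoots Rad t).ncard using Nat.strong_induction_on generalizing t with
  | _ n ih =>
  have hfin : (imaginaryRoots Rad t).Finite := hRS.finite.subset (Set.sep_subset _ _)
  obtain hempty | hne := (imaginaryRoots Rad t).eq_empty_or_nonempty
  · exact ⟨t, 0, Fin.elim0, isSpecialFactorization_of_imaginaryRoots_eq_empty ht hempty⟩
  obtain ⟨β, hβ, hmax⟩ := Set.exists_max_image _ (fun x => ‖x‖) hfin hne
  have hβ0 : β ≠ 0 := hRS.nonzero β hβ.1
  have hs : ∀ x, (ℝ ∙ β)ᗮ.reflection x = reflRoot β x :=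
    reflection_orthogonal_span_singleton_apply β
  have hts : ∀ x, t ((ℝ ∙ β)ᗮ.reflection x) = (ℝ ∙ β)ᗮ.reflection (t x) := fun x => by
    rw [hs, hs, map_reflRoot, hβ.2, reflRoot_neg]
  set t' := (ℝ ∙ β)ᗮ.reflection.trans t
  have ht' : IsInvolution Rad t' := (isInvolution_reflection hRS hβ.1).trans ht hts
  have hβ' : β ∉ imaginaryRoots Rad t' := fun h =>
    hβ0 (by simpa using (imaginaryRoots_reflection_trans_subset hβ.2 h).2)
  have hlt : (imaginaryRoots Rad t').ncard < n := hn ▸ Set.ncard_lt_ncard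
    ⟨fun α hα => (imaginaryRoots_reflection_trans_subset hβ.2 hα).1,
      fun h => hβ' (h hβ)⟩ hfin
  obtain ⟨ε, r, b, hb⟩ := ih _ hlt ht' rfl
  exact ⟨ε, r + 1, Fin.cons β b, hb.cons hRS hβ hmax⟩

end RootSystem

theorem stmt3_general {V : Type*} [NormedAddCommGroup V] [InnerProductSpace ℝ V]
    (Rad : Set V) (hRS : IsRootSystem Rad)
    (t : V ≃ₗᵢ[ℝ] V) (ht : IsInvolution Rad t) :
    ∃ (ε : V ≃ₗᵢ[ℝ] V) (r : ℕ) (β : Fin r → V),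
      IsInvolution Rad ε ∧ (∀ α ∈ Rad, ε α ≠ -α) ∧
      (∀ i, β i ∈ Rad) ∧ (∀ i j, i ≠ j → StronglyOrthogonal Rad (β i) (β j)) ∧
      (∀ i, ε (β i) = β i) ∧ (∀ i, t (β i) = -(β i)) ∧
      (∀ x : V, t x = ε (reflComp r β x)) := by
  obtain ⟨ε, r, β, h⟩ := exists_isSpecialFactorization hRS ht
  exact ⟨ε, r, β, h.isInvolution, h.special, h.mem, h.stronglyOrthogonal, h.fixed, h.negated,
    h.eq_comp⟩

/-- every involution factors as a special involution composed with the
reflections in a set of pairwise strongly orthogonal imaginary roots fixed by the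
special involution. -/
theorem stmt3 {V : Type*} [NormedAddCommGroup V] [InnerProductSpace ℝ V]
    [FiniteDimensional ℝ V] (Rad : Set V) (hRS : IsRootSystem Rad)
    (t : V ≃ₗᵢ[ℝ] V) (ht : IsInvolution Rad t) :
    ∃ (ε : V ≃ₗᵢ[ℝ] V) (r : ℕ) (β : Fin r → V),
      IsInvolution Rad ε ∧ (∀ α ∈ Rad, ε α ≠ -α) ∧
      (∀ i, β i ∈ Rad) ∧ (∀ i j, i ≠ j → StronglyOrthogonal Rad (β i) (β j)) ∧
      (∀ i, ε (β i) = β i) ∧ (∀ i, t (β i) = -(β i)) ∧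
      (∀ x : V, t x = ε (reflComp r β x)) :=
  stmt3_general Rad hRS t ht

end PaperRS
end

section
/- Let Rad be a root system in a finite-dimensional real inner product space V and let ε be a special involution of Rad. Then there exists a regular vector v ∈ V such that ε(R⁺(v)) = R⁺(v), i.e., for every α ∈ Rad one has (α,v) > 0 if and only if (ε(α),v) > 0. -/
open scoped RealInnerProductSpace

namespace PaperRS

variable {V : Type*} [NormedAddCommGroup V] [InnerProductSpace ℝ V]

/-- a special involution preserves some system of positive roots. -/
theorem stmt5 {V : Type*} [NormedAddCommGroup V] [InnerProductSpace ℝ V]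
    [FiniteDimensional ℝ V] (Rad : Set V) (hRS : IsRootSystem Rad)
    (ε : V ≃ₗᵢ[ℝ] V) (hε : IsInvolution Rad ε) (hsp : ∀ α ∈ Rad, ε α ≠ -α) :
    ∃ v : V, IsRegular Rad v ∧ ∀ α ∈ Rad, (0 < ⟪α, v⟫ ↔ 0 < ⟪ε α, v⟫) := by
  classical
  -- the fixed subspace of ε
  set W : Submodule ℝ V := LinearMap.eqLocus ε.toLinearEquiv.toLinearMap LinearMap.id with hWdef
  have hmemW : ∀ x : V, x ∈ W ↔ ε x = x := by
    intro x; rfl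
  -- every root has a fixed vector not orthogonal to it
  have hkey : ∀ α ∈ Rad, ∃ x : W, ⟪α, (x : V)⟫ ≠ 0 := by
    intro α hα
    have hx : α + ε α ∈ W := by
      rw [hmemW, map_add, hε.invol α, add_comm]
    refine ⟨⟨α + ε α, hx⟩, ?_⟩
    have hne : α + ε α ≠ 0 := by
      intro h
      exact hsp α hα (by linear_combination (norm := module) h)
    have : ⟪α + ε α, α + ε α⟫ = 2 * ⟪α, α + ε α⟫ := by
      have h1 : ⟪ε α, ε α⟫ = ⟪α, α⟫ := ε.inner_map_map α α
      have h2 : ⟪ε α, α⟫ = ⟪α, ε α⟫ := real_inner_comm _ _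
      simp only [inner_add_add_self, inner_add_right, inner_add_left]
      linarith
    have hpos : (0:ℝ) < ⟪α + ε α, α + ε α⟫ :=
      real_inner_self_nonneg.lt_of_ne (fun h => hne (real_inner_self_nonpos.1 h.ge))
    intro h0
    rw [this, h0] at hpos
    norm_num at hpos
  -- functionals on W given by roots
  have hFin : Rad.Finite := hRS.finite
  have : Finite Rad := hFin
  set f : Rad → (W →ₗ[ℝ] ℝ) :=
    fun α => (innerSL ℝ (α : V)).toLinearMap.comp W.subtype with hf
  -- there is a common non-vanishing point
  have hex : ∃ w : W, ∀ α : Rad, f α w ≠ 0 := by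
    by_contra h
    push_neg at h
    have hcov : ⋃ α : Rad, ((LinearMap.ker (f α) : Submodule ℝ W) : Set W) = Set.univ := by
      ext w
      simp only [Set.mem_iUnion, Set.mem_univ, iff_true, SetLike.mem_coe,
        LinearMap.mem_ker]
      exact h w
    obtain ⟨α, hαtop⟩ := Subspace.exists_eq_top_of_iUnion_eq_univ hcov
    obtain ⟨x, hx⟩ := hkey α α.2
    exact hx (by simpa [f] using (LinearMap.mem_ker.1 (hαtop ▸ Submodule.mem_top : x ∈ LinearMap.ker (f α))))
  obtain ⟨w, hw⟩ := hex
  have hwfix : ε (w : V) = (w : V) := (hmemW _).1 w.2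
  have hreg : IsRegular Rad (w : V) := by
    intro α hα h0
    exact hw ⟨α, hα⟩ (by simpa [f] using h0)
  refine ⟨(w : V), hreg, ?_⟩
  intro α hα
  have : ⟪ε α, (w : V)⟫ = ⟪α, (w : V)⟫ := by
    conv_lhs => rw [← hwfix]
    exact ε.inner_map_map α w
  rw [this]


end PaperRS
end

section
/- Let Rad be a root system in a finite-dimensional real inner product space V and let t be an involution of Rad. Then there exists a regular vector v ∈ V such that (α,v)·(t(α),v) > 0 for every root α with t(α) ≠ ±α; that is, every involution of Rad admits an S-chamber. -/
/-!
Pick `x` off the finitely many hyperplanes `(α + t α)ᗮ` and put `w = x + t x`. Then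
`⟪t α, w⟫ = ⟪α, w⟫ = ⟪α + t α, x⟫`, which is nonzero for every root with `t α ≠ -α`.
A regular `v` close enough to `w` satisfies `⟪α, v⟫ ⟪α, w⟫ > 0` whenever `⟪α, w⟫ ≠ 0`; applied to
`α` and `t α` this gives `⟪α, v⟫ ⟪t α, v⟫ > 0`. Such a `v` exists because the regular vectors
are dense and the sign conditions cut out an open neighbourhood of `w`.
-/

open scoped RealInnerProductSpace

namespace PaperRS

variable {V : Type*} [NormedAddCommGroup V] [InnerProductSpace ℝ V]

lemma dense_setOf_inner_ne_zero {β : V} (hβ : β ≠ 0) : Dense {v : V | ⟪β, v⟫ ≠ 0} := by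
  have hker : {v : V | ⟪β, v⟫ ≠ 0} = (LinearMap.ker (innerₛₗ ℝ β) : Set V)ᶜ := by
    ext v; simp
  rw [hker, ← interior_eq_empty_iff_dense_compl, ← Set.not_nonempty_iff_eq_empty]
  intro hint
  have hββ : β ∈ LinearMap.ker (innerₛₗ ℝ β) := by
    rw [Submodule.eq_top_of_nonempty_interior' _ hint]
    exact Submodule.mem_top
  exact hβ (inner_self_eq_zero.1 hββ)

lemma dense_setOf_forall_inner_ne_zero {S : Set V} (hS : S.Finite) (h0 : ∀ β ∈ S, β ≠ 0) :
    Dense {v : V | ∀ β ∈ S, ⟪β, v⟫ ≠ 0} := by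
  have hinter : {v : V | ∀ β ∈ S, ⟪β, v⟫ ≠ 0} = ⋂₀ ((fun β => {v : V | ⟪β, v⟫ ≠ 0}) '' S) := by
    ext v; simp
  rw [hinter]
  refine (hS.image _).dense_sInter ?_ ?_
  · rintro _ ⟨β, -, rfl⟩
    exact isOpen_ne_fun (by fun_prop) continuous_const
  · rintro _ ⟨β, hβ, rfl⟩
    exact dense_setOf_inner_ne_zero (h0 β hβ)

lemma isOpen_setOf_inner_sign_eq {S : Set V} (hS : S.Finite) (w : V) :
    IsOpen {v : V | ∀ β ∈ S, ⟪β, w⟫ ≠ 0 → 0 < ⟪β, w⟫ * ⟪β, v⟫} := by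
  have hinter : {v : V | ∀ β ∈ S, ⟪β, w⟫ ≠ 0 → 0 < ⟪β, w⟫ * ⟪β, v⟫} =
      ⋂ β ∈ S, {v : V | ⟪β, w⟫ ≠ 0 → 0 < ⟪β, w⟫ * ⟪β, v⟫} := by
    ext v; simp
  rw [hinter]
  refine hS.isOpen_biInter fun β _ => ?_
  by_cases hβw : ⟪β, w⟫ = 0
  · simp [hβw]
  · simpa [hβw] using isOpen_lt continuous_const (by fun_prop)

lemma exists_forall_inner_ne_zero_and_inner_sign_eq {S : Set V} (hS : S.Finite)
    (h0 : ∀ β ∈ S, β ≠ 0) (w : V) :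
    ∃ v : V, (∀ β ∈ S, ⟪β, v⟫ ≠ 0) ∧ ∀ β ∈ S, ⟪β, w⟫ ≠ 0 → 0 < ⟪β, w⟫ * ⟪β, v⟫ := by
  obtain ⟨v, hsign, hreg⟩ := (dense_setOf_forall_inner_ne_zero hS h0).inter_open_nonempty _
    (isOpen_setOf_inner_sign_eq hS w) ⟨w, fun β _ hβw => mul_self_pos.2 hβw⟩
  exact ⟨v, hreg, hsign⟩

lemma inner_add_map_self_of_involutive {t : V ≃ₗᵢ[ℝ] V} (ht : Function.Involutive t)
    (α x : V) : ⟪α, x + t x⟫ = ⟪α + t α, x⟫ := by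
  have hadj : ⟪α, t x⟫ = ⟪t α, x⟫ := by
    rw [← t.inner_map_map, ht]
  rw [inner_add_right, inner_add_left, hadj]

theorem stmt7_general {V : Type*} [NormedAddCommGroup V] [InnerProductSpace ℝ V]
    (Rad : Set V) (hRS : IsRootSystem Rad)
    (t : V ≃ₗᵢ[ℝ] V) (ht : IsInvolution Rad t) :
    ∃ v : V, IsSChamber Rad t v := by
  have hinv : Function.Involutive t := ht.invol
  have hmem : ∀ α ∈ Rad, t α ∈ Rad := fun α hα => ht.maps ▸ Set.mem_image_of_mem t hα
  obtain ⟨x, hx⟩ := (dense_setOf_forall_inner_ne_zero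
    ((hRS.finite.subset (Set.sep_subset Rad _)).image fun α => α + t α)
    (by rintro _ ⟨α, ⟨-, hα⟩, rfl⟩; exact hα)).nonempty
  set w := x + t x
  have hmap : ∀ α, ⟪t α, w⟫ = ⟪α, w⟫ := fun α => by
    rw [inner_add_map_self_of_involutive hinv, hinv α, add_comm,
      ← inner_add_map_self_of_involutive hinv]
  obtain ⟨v, hreg, hsign⟩ := exists_forall_inner_ne_zero_and_inner_sign_eq hRS.finite hRS.nonzero w
  refine ⟨v, hreg, fun α hα _ hneg => ?_⟩
  have hαw : ⟪α, w⟫ ≠ 0 := by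
    rw [inner_add_map_self_of_involutive hinv]
    exact hx _ ⟨α, ⟨hα, fun h => hneg (eq_neg_of_add_eq_zero_right h)⟩, rfl⟩
  have hαv := hsign α hα hαw
  have htαv := hsign (t α) (hmem α hα) (by rwa [hmap])
  rw [hmap] at htαv
  nlinarith [mul_pos hαv htαv, mul_self_pos.2 hαw]

/-- every involution of a root system admits an S-chamber. -/
theorem stmt7 {V : Type*} [NormedAddCommGroup V] [InnerProductSpace ℝ V]
    [FiniteDimensional ℝ V] (Rad : Set V) (hRS : IsRootSystem Rad)
    (t : V ≃ₗᵢ[ℝ] V) (ht : IsInvolution Rad t) :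
    ∃ v : V, IsSChamber Rad t v :=
  stmt7_general Rad hRS t ht

end PaperRS
end

section
/- Let Rad be a root system in a finite-dimensional real inner product space V, let t be an involution of Rad, let v be an S-chamber vector for t, and let R_•^t = {α ∈ Rad : t(α) = −α}. Then P := R⁺(v) ∪ R_•^t satisfies t(P) = P, P ∪ (−P) = Rad, and P is closed (if α, β ∈ P and α + β ∈ Rad then α + β ∈ P); moreover Q := R⁺(v) \ R_•^t satisfies t(Q) = Q and Rad \ Q is parabolic (i.e., Q is horocyclic). -/
open scoped RealInnerProductSpace

namespace PaperRS

variable {V : Type*} [NormedAddCommGroup V] [InnerProductSpace ℝ V]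

lemma negMem {Rad : Set V} (hRS : IsRootSystem Rad) {α : V} (hα : α ∈ Rad) :
    -α ∈ Rad := by
  have h := hRS.reflMem α hα α hα
  have hne : ⟪α, α⟫ ≠ 0 := inner_self_ne_zero.mpr (hRS.nonzero α hα)
  have h2 : (2 * ⟪α, α⟫ / ⟪α, α⟫ : ℝ) = 2 := by field_simp
  have : reflRoot α α = -α := by
    unfold reflRoot
    rw [h2]
    module
  rwa [this] at h

lemma keyLem {Rad : Set V} (hRS : IsRootSystem Rad) {t : V ≃ₗᵢ[ℝ] V}
    (ht : IsInvolution Rad t) {v : V} (hv : IsSChamber Rad t v) :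
    ((⇑t) '' (posRoots Rad v ∪ {α ∈ Rad | t α = -α})
        = posRoots Rad v ∪ {α ∈ Rad | t α = -α}) ∧
    IsParabolic Rad (posRoots Rad v ∪ {α ∈ Rad | t α = -α}) := by
  obtain ⟨hreg, hS⟩ := hv
  have htRad : ∀ α ∈ Rad, t α ∈ Rad := fun α hα => ht.maps ▸ ⟨α, hα, rfl⟩
  have hsub : ∀ α ∈ (posRoots Rad v ∪ {α ∈ Rad | t α = -α}),
      t α ∈ posRoots Rad v ∪ {α ∈ Rad | t α = -α} := by
    rintro α (⟨hαRad, hαv⟩ | ⟨hαRad, hαt⟩)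
    · by_cases h2 : t α = -α
      · exact Or.inr ⟨htRad α hαRad, by rw [ht.invol α, h2, neg_neg]⟩
      · by_cases h1 : t α = α
        · exact Or.inl ⟨htRad α hαRad, by rw [h1]; exact hαv⟩
        · refine Or.inl ⟨htRad α hαRad, ?_⟩
          have := hS α hαRad h1 h2
          nlinarith
    · refine Or.inr ⟨htRad α hαRad, ?_⟩
      rw [ht.invol α, hαt, neg_neg]
  have sumA : ∀ α ∈ (posRoots Rad v ∪ {α ∈ Rad | t α = -α}),
      0 ≤ ⟪α, v⟫ + ⟪t α, v⟫ := by
    rintro α (⟨hαRad, hαv⟩ | ⟨hαRad, hαt⟩)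
    · by_cases h2 : t α = -α
      · rw [h2, inner_neg_left]; linarith
      · by_cases h1 : t α = α
        · rw [h1]; linarith
        · have := hS α hαRad h1 h2; nlinarith
    · rw [hαt, inner_neg_left]; linarith
  constructor
  · apply Set.Subset.antisymm
    · rintro x ⟨α, hα, rfl⟩; exact hsub α hα
    · intro α hα
      exact ⟨t α, hsub α hα, ht.invol α⟩
  · refine ⟨?_, ?_, ?_⟩
    · rintro α (⟨h, _⟩ | ⟨h, _⟩) <;> exact h
    · intro α hα
      rcases (hreg α hα).lt_or_gt with h | h
      · right; left
        refine ⟨negMem hRS hα, ?_⟩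
        rw [inner_neg_left]; linarith
      · left; left; exact ⟨hα, h⟩
    · intro α hα β hβ hγ
      have hγt : t (α + β) ∈ Rad := htRad _ hγ
      have hsum : 0 ≤ ⟪α + β, v⟫ + ⟪t (α + β), v⟫ := by
        have h1 := sumA α hα
        have h2 := sumA β hβ
        rw [map_add, inner_add_left, inner_add_left]
        linarith
      by_cases hc : t (α + β) = -(α + β)
      · exact Or.inr ⟨hγ, hc⟩
      · refine Or.inl ⟨hγ, ?_⟩
        by_cases hc2 : t (α + β) = α + β
        · rw [hc2] at hsum
          rcases (hreg _ hγ).lt_or_gt with h | h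
          · linarith
          · exact h
        · have hprod := hS _ hγ hc2 hc
          rcases (hreg _ hγ).lt_or_gt with h | h
          · exfalso; nlinarith
          · exact h

/-- for an S-chamber vector `v` for `t`, the set `R⁺(v) ∪ Rـ•` is
`t`-invariant and parabolic, and `R⁺(v) \ R_•` is `t`-invariant and horocyclic. -/
theorem stmt8 {V : Type*} [NormedAddCommGroup V] [InnerProductSpace ℝ V]
    [FiniteDimensional ℝ V] (Rad : Set V) (hRS : IsRootSystem Rad)
    (t : V ≃ₗᵢ[ℝ] V) (ht : IsInvolution Rad t) (v : V) (hv : IsSChamber Rad t v) :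
    ((⇑t) '' (posRoots Rad v ∪ {α ∈ Rad | t α = -α})
        = posRoots Rad v ∪ {α ∈ Rad | t α = -α}) ∧
      IsParabolic Rad (posRoots Rad v ∪ {α ∈ Rad | t α = -α}) ∧
      ((⇑t) '' (posRoots Rad v \ {α ∈ Rad | t α = -α})
        = posRoots Rad v \ {α ∈ Rad | t α = -α}) ∧
      IsParabolic Rad (Rad \ (posRoots Rad v \ {α ∈ Rad | t α = -α})) := by
  obtain ⟨hinv, hpar⟩ := keyLem hRS ht hv
  have hvneg : IsSChamber Rad t (-v) := by
    obtain ⟨hreg, hS⟩ := hv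
    refine ⟨fun α hα => by simpa [inner_neg_right] using hreg α hα, fun α hα ha hb => ?_⟩
    have := hS α hα ha hb
    simp only [inner_neg_right]
    nlinarith
  obtain ⟨hreg, hS⟩ := hv
  have htRad : ∀ α ∈ Rad, t α ∈ Rad := fun α hα => ht.maps ▸ ⟨α, hα, rfl⟩
  have hQsub : ∀ α ∈ posRoots Rad v \ {α ∈ Rad | t α = -α},
      t α ∈ posRoots Rad v \ {α ∈ Rad | t α = -α} := by
    rintro α ⟨⟨hαRad, hαv⟩, hαn⟩
    have h2' : t α ≠ -α := fun h => hαn ⟨hαRad, h⟩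
    have htαpos : 0 < ⟪t α, v⟫ := by
      by_cases h1' : t α = α
      · rw [h1']; exact hαv
      · have := hS α hαRad h1' h2'; nlinarith
    refine ⟨⟨htRad α hαRad, htαpos⟩, ?_⟩
    rintro ⟨_, hcontra⟩
    rw [ht.invol α] at hcontra
    exact h2' (by simpa using congrArg Neg.neg hcontra.symm)
  have hset : Rad \ (posRoots Rad v \ {α ∈ Rad | t α = -α})
      = posRoots Rad (-v) ∪ {α ∈ Rad | t α = -α} := by
    ext α
    simp only [Set.mem_diff, Set.mem_union, posRoots, Set.mem_setOf_eq, inner_neg_right]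
    constructor
    · rintro ⟨hαRad, hn⟩
      by_cases hc : t α = -α
      · exact Or.inr ⟨hαRad, hc⟩
      · left
        refine ⟨hαRad, ?_⟩
        rcases (hreg α hαRad).lt_or_gt with h | h
        · linarith
        · exact absurd (⟨⟨hαRad, h⟩, fun h' => hc h'.2⟩ :
            (α ∈ Rad ∧ 0 < ⟪α, v⟫) ∧ ¬(α ∈ Rad ∧ t α = -α)) hn
    · rintro (⟨hαRad, hαv⟩ | ⟨hαRad, hαt⟩)
      · exact ⟨hαRad, fun h => absurd h.1.2 (by linarith)⟩
      · exact ⟨hαRad, fun h => h.2 ⟨hαRad, hαt⟩⟩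
  refine ⟨hinv, hpar, ?_, ?_⟩
  · apply Set.Subset.antisymm
    · rintro x ⟨α, hα, rfl⟩; exact hQsub α hα
    · intro α hα
      exact ⟨t α, hQsub α hα, ht.invol α⟩
  · rw [hset]
    exact (keyLem hRS ht hvneg).2

end PaperRS
end

section
/- Let Rad be a root system in a finite-dimensional real inner product space V, let t be an involution of Rad, let v be an S-chamber vector for t, let B = B(v), and let B_• = {β ∈ B : t(β) = −β}. Let α ∈ B with t(α) ≠ ±α. Then there exists a unique α' ∈ B such that t(α) − α' lies in the ℤ-span of B_•. Moreover α'' := t(α) − α' lies in the ℤ_{≥0}-span of B_•, α + α'' ∈ Rad, and among all γ in the ℤ_{≥0}-span of B_• with α + γ ∈ Rad, the element α'' is the unique one of maximal coefficient sum (the sum of the coordinates of γ with respect to B_•). -/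
/-!
Expand `t α = ∑ n_β β` in the simple base (all `n_β ∈ ℕ`, since `t α` is a positive root) and let
`F` be the sum of the coefficients along the complex simple roots. The S-chamber condition makes
`t` send every complex simple root to a positive root with `F ≥ 1`, and `t` negates the imaginary
ones, so `F x ≤ F (t x)` on the positive cone. For `x = t α` this gives `F (t α) ≤ F α = 1`: hence
`t α = α' + α''` with a single complex simple root `α'` and `α''` in the `ℕ`-span of the imaginary
simple roots. As `t` negates `α''`, `t α' = α + α''` is a root. Finally, if `α + γ` is a root for
some `γ` in that `ℕ`-span, then `t α - γ = t (α + γ)` is a root with `α'`-coefficient `1`, hence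
positive, so `α'' - γ = (t α - γ) - α'` has nonnegative coefficients.
-/

open scoped RealInnerProductSpace

namespace PaperRS

variable {V : Type*} [NormedAddCommGroup V] [InnerProductSpace ℝ V]

section Basis

variable {ι M : Type*} [AddCommGroup M] [Module ℝ M] (b : Module.Basis ι ℝ M) {x : M}

theorem _root_.Module.Basis.repr_eq_zero_of_mem_span_image {s : Set ι} {i : ι}
    (hx : x ∈ Submodule.span ℝ (b '' s)) (hi : i ∉ s) : b.repr x i = 0 :=
  Finsupp.notMem_support_iff.mp fun h => hi (b.mem_span_image.mp hx h)

theorem _root_.Module.Basis.eq_of_sub_mem_span_image {s : Set ι} {i j : ι} (hi : i ∉ s)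
    (h : b i - b j ∈ Submodule.span ℝ (b '' s)) : i = j := by
  classical
  by_contra hij
  simpa [Finsupp.single_apply, Ne.symm hij] using b.repr_eq_zero_of_mem_span_image h hi

theorem _root_.Module.Basis.mem_closure_image_iff {s : Set ι} :
    x ∈ AddSubmonoid.closure (b '' s) ↔
      (∀ i, ∃ n : ℕ, b.repr x i = n) ∧ x ∈ Submodule.span ℝ (b '' s) := by
  classical
  refine ⟨fun hx => ⟨?_, Submodule.closure_subset_span hx⟩, fun ⟨hn, hxs⟩ => ?_⟩
  · induction hx using AddSubmonoid.closure_induction with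
    | mem _ h =>
      obtain ⟨j, -, rfl⟩ := h
      exact fun i => ⟨if j = i then 1 else 0, by simp [Finsupp.single_apply, apply_ite]⟩
    | zero => exact fun _ => ⟨0, by simp⟩
    | add _ _ _ _ hx hy =>
      intro i
      obtain ⟨m, hm⟩ := hx i
      obtain ⟨n, hn⟩ := hy i
      exact ⟨m + n, by simp [hm, hn]⟩
  · choose n hn using hn
    rw [← b.linearCombination_repr x, Finsupp.linearCombination_apply]
    refine AddSubmonoidClass.finsuppSum_mem _ _ _ fun i hi => ?_
    rw [hn i, Nat.cast_smul_eq_nsmul]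
    exact nsmul_mem (AddSubmonoid.subset_closure
      (Set.mem_image_of_mem b (b.mem_span_image.mp hxs (Finsupp.mem_support_iff.mpr hi)))) _

theorem _root_.Module.Basis.mem_closure_range_iff :
    x ∈ AddSubmonoid.closure (Set.range b) ↔ ∀ i, ∃ n : ℕ, b.repr x i = n := by
  simpa [b.span_eq] using b.mem_closure_image_iff (s := Set.univ)

theorem _root_.Module.Basis.sub_mem_closure_range_of_repr_ne_zero {i : ι}
    (hx : x ∈ AddSubmonoid.closure (Set.range b)) (hi : b.repr x i ≠ 0) :
    x - b i ∈ AddSubmonoid.closure (Set.range b) := by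
  classical
  rw [b.mem_closure_range_iff] at hx ⊢
  intro j
  obtain ⟨n, hn⟩ := hx j
  by_cases hij : i = j
  · subst hij
    obtain ⟨m, rfl⟩ := Nat.exists_eq_succ_of_ne_zero (n := n) fun h => hi (by simp [hn, h])
    exact ⟨m, by simp [hn]⟩
  · exact ⟨n, by simp [hn, hij]⟩

theorem _root_.Module.Basis.constr_mono_of_mem_closure_range {f g : ι → ℝ} (hfg : f ≤ g)
    (hx : x ∈ AddSubmonoid.closure (Set.range b)) : b.constr ℝ f x ≤ b.constr ℝ g x := by
  choose n hn using b.mem_closure_range_iff.mp hx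
  simp only [b.constr_apply, Finsupp.sum, smul_eq_mul]
  exact Finset.sum_le_sum fun i _ => by
    rw [hn i]; exact mul_le_mul_of_nonneg_left (hfg i) (Nat.cast_nonneg _)

theorem _root_.Module.Basis.le_constr_of_repr_ne_zero {f : ι → ℝ} {i : ι} (hf : 0 ≤ f)
    (hx : x ∈ AddSubmonoid.closure (Set.range b)) (hi : b.repr x i ≠ 0) :
    f i ≤ b.constr ℝ f x := by
  choose n hn using b.mem_closure_range_iff.mp hx
  have hn1 : 1 ≤ n i := Nat.one_le_iff_ne_zero.mpr (by rintro h; exact hi (by simp [hn, h]))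
  simp only [b.constr_apply, Finsupp.sum, smul_eq_mul]
  calc f i ≤ b.repr x i * f i := by
        rw [hn i]; exact le_mul_of_one_le_left (hf i) (by exact_mod_cast hn1)
    _ ≤ ∑ j ∈ (b.repr x).support, b.repr x j * f j :=
        Finset.single_le_sum (f := fun j => b.repr x j * f j)
          (fun j _ => by rw [hn j]; exact mul_nonneg (Nat.cast_nonneg _) (hf j))
          (Finsupp.mem_support_iff.mpr hi)

theorem _root_.Module.Basis.one_le_sumCoords_of_mem_closure_range
    (hx : x ∈ AddSubmonoid.closure (Set.range b)) (hx0 : x ≠ 0) : 1 ≤ b.sumCoords x := by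
  obtain ⟨i, hi⟩ := Finsupp.ne_iff.mp (b.repr.map_ne_zero_iff.mpr hx0)
  have hsum : b.sumCoords = b.constr ℝ 1 := b.ext fun j => by simp
  rw [hsum]
  exact b.le_constr_of_repr_ne_zero zero_le_one hx hi

end Basis

theorem map_finsuppSum_nsmul_of_map_eq_one {M : Type*} [AddCommMonoid M] (φ : M →+ ℝ)
    (c : M →₀ ℕ) (hc : ∀ β ∈ c.support, φ β = 1) :
    φ (c.sum fun β n => n • β) = (c.sum fun _ n => n : ℕ) := by
  rw [map_finsuppSum, Finsupp.sum, Finsupp.sum, Nat.cast_sum]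
  exact Finset.sum_congr rfl fun β hβ => by simp [hc β hβ]

variable {Rad : Set V} {v : V}

namespace IsRootSystem

variable (hRS : IsRootSystem Rad)
include hRS

theorem inner_self_pos {α : V} (hα : α ∈ Rad) : 0 < ⟪α, α⟫ :=
  real_inner_self_pos.mpr (hRS.nonzero α hα)

theorem neg_mem_s9 {α : V} (hα : α ∈ Rad) : -α ∈ Rad := by
  have h := hRS.reflMem α hα α hα
  rwa [reflRoot, mul_div_cancel_right₀ _ (hRS.inner_self_pos hα).ne', two_smul,
    sub_add_cancel_left] at h

theorem sub_mem_of_inner_pos {α β : V} (hα : α ∈ Rad) (hβ : β ∈ Rad) (hne : α ≠ β)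
    (hpos : 0 < ⟪α, β⟫) : α - β ∈ Rad := by
  obtain ⟨m, hm⟩ := hRS.integral β hβ α hα
  obtain ⟨n, hn⟩ := hRS.integral α hα β hβ
  by_cases hm1 : m = 1
  · have h := hRS.reflMem β hβ α hα
    rwa [reflRoot, hm, hm1, Int.cast_one, one_smul] at h
  by_cases hn1 : n = 1
  · have h := hRS.neg_mem_s9 (hRS.reflMem α hα β hβ)
    rwa [reflRoot, hn, hn1, Int.cast_one, one_smul, neg_sub] at h
  -- both Cartan integers are at least 2, which forces `‖α - β‖² ≤ 0`
  have hαα := hRS.inner_self_pos hα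
  have hββ := hRS.inner_self_pos hβ
  rw [div_eq_iff hββ.ne'] at hm
  rw [div_eq_iff hαα.ne', real_inner_comm] at hn
  have hm2 : (2 : ℝ) ≤ m := by
    have := Int.cast_pos.mp (pos_of_mul_pos_left (hm ▸ by positivity) hββ.le : (0 : ℝ) < m)
    exact_mod_cast (by omega : 2 ≤ m)
  have hn2 : (2 : ℝ) ≤ n := by
    have := Int.cast_pos.mp (pos_of_mul_pos_left (hn ▸ by positivity) hαα.le : (0 : ℝ) < n)
    exact_mod_cast (by omega : 2 ≤ n)
  have : ⟪α - β, α - β⟫ ≤ 0 := by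
    rw [inner_sub_sub_self, real_inner_comm α β]
    nlinarith [mul_le_mul_of_nonneg_right hm2 hββ.le, mul_le_mul_of_nonneg_right hn2 hαα.le]
  exact absurd (sub_eq_zero.mp (real_inner_self_nonpos.mp this)) hne

theorem mem_posRoots_or_neg_mem_posRoots (hreg : IsRegular Rad v) {γ : V} (hγ : γ ∈ Rad) :
    γ ∈ posRoots Rad v ∨ -γ ∈ posRoots Rad v := by
  rcases (hreg γ hγ).lt_or_gt with h | h
  · exact .inr ⟨hRS.neg_mem_s9 hγ, by rw [inner_neg_left]; linarith⟩
  · exact .inl ⟨hγ, h⟩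

end IsRootSystem

theorem posRoots_subset_closure_simpleBase (hfin : Rad.Finite) :
    posRoots Rad v ⊆ AddSubmonoid.closure (simpleBase Rad v) := by
  obtain ⟨ε, hε, hεle⟩ : ∃ ε > 0, ∀ δ ∈ posRoots Rad v, ε ≤ ⟪δ, v⟫ := by
    rcases (posRoots Rad v).eq_empty_or_nonempty with h | h
    · exact ⟨1, one_pos, by simp [h]⟩
    · obtain ⟨δ₀, hδ₀, hmin⟩ :=
        Set.exists_min_image _ (fun δ => ⟪δ, v⟫) (hfin.subset fun _ h => h.1) h
      exact ⟨_, hδ₀.2, hmin⟩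
  -- splitting a positive root into two lowers `⟪·, v⟫` by at least `ε`
  suffices h : ∀ n : ℕ, ∀ γ ∈ posRoots Rad v, ⟪γ, v⟫ < n * ε →
      γ ∈ AddSubmonoid.closure (simpleBase Rad v) by
    intro γ hγ
    obtain ⟨n, hn⟩ := exists_nat_gt (⟪γ, v⟫ / ε)
    exact h n γ hγ ((div_lt_iff₀ hε).mp hn)
  intro n
  induction n with
  | zero => intro γ hγ h; simp only [Nat.cast_zero, zero_mul] at h; linarith [hγ.2]
  | succ n ih =>
    intro γ hγ hlt
    by_cases hsimple : γ ∈ simpleBase Rad v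
    · exact AddSubmonoid.subset_closure hsimple
    obtain ⟨β, hβ, δ, hδ, rfl⟩ : ∃ β ∈ posRoots Rad v, ∃ δ ∈ posRoots Rad v, γ = β + δ :=
      not_not.mp fun h => hsimple ⟨hγ, h⟩
    rw [inner_add_left, Nat.cast_succ] at hlt
    exact add_mem (ih β hβ (by linarith [hεle δ hδ])) (ih δ hδ (by linarith [hεle β hβ]))

section Simple

variable (hRS : IsRootSystem Rad) (hreg : IsRegular Rad v)
include hRS hreg

theorem sub_notMem_of_mem_simpleBase {α β : V} (hα : α ∈ simpleBase Rad v)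
    (hβ : β ∈ simpleBase Rad v) : α - β ∉ Rad := fun hmem => by
  rcases hRS.mem_posRoots_or_neg_mem_posRoots hreg hmem with h | h
  · exact hα.2 ⟨β, hβ.1, α - β, h, by abel⟩
  · exact hβ.2 ⟨α, hα.1, β - α, by rwa [neg_sub] at h, by abel⟩

theorem inner_nonpos_of_mem_simpleBase {α β : V} (hα : α ∈ simpleBase Rad v)
    (hβ : β ∈ simpleBase Rad v) (hne : α ≠ β) : ⟪α, β⟫ ≤ 0 :=
  not_lt.mp fun h => sub_notMem_of_mem_simpleBase hRS hreg hα hβ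
    (hRS.sub_mem_of_inner_pos hα.1.1 hβ.1.1 hne h)

theorem linearIndependent_simpleBase :
    LinearIndependent ℝ ((↑) : simpleBase Rad v → V) :=
  LinearMap.BilinForm.linearIndependent_of_pairwise_le_zero (innerₗ V)
    (fun x hx => by simpa using real_inner_self_pos.mpr hx) (innerₗ V v) _
    (fun i => by simpa [real_inner_comm] using i.2.1.2)
    fun i j hij => inner_nonpos_of_mem_simpleBase hRS hreg i.2 j.2 (Subtype.coe_ne_coe.mpr hij)

theorem span_simpleBase : Submodule.span ℝ (simpleBase Rad v) = ⊤ := by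
  have hpos : posRoots Rad v ⊆ Submodule.span ℝ (simpleBase Rad v) :=
    (posRoots_subset_closure_simpleBase hRS.finite).trans Submodule.closure_subset_span
  rw [eq_top_iff, ← hRS.spanning, Submodule.span_le]
  intro γ hγ
  rcases hRS.mem_posRoots_or_neg_mem_posRoots hreg hγ with h | h
  · exact hpos h
  · simpa using hpos h

noncomputable def simpleBasis : Module.Basis (simpleBase Rad v) ℝ V :=
  .mk (linearIndependent_simpleBase hRS hreg)
    (by rw [Subtype.range_coe]; exact (span_simpleBase hRS hreg).ge)

@[simp]
theorem simpleBasis_apply (i : simpleBase Rad v) : simpleBasis hRS hreg i = i :=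
  Module.Basis.mk_apply _ _ i

theorem range_simpleBasis : Set.range (simpleBasis hRS hreg) = simpleBase Rad v := by
  rw [simpleBasis, Module.Basis.coe_mk, Subtype.range_coe]

theorem mem_posRoots_of_repr_pos {x : V} (hx : x ∈ Rad) {i : simpleBase Rad v}
    (hi : 0 < (simpleBasis hRS hreg).repr x i) : x ∈ posRoots Rad v := by
  refine (hRS.mem_posRoots_or_neg_mem_posRoots hreg hx).resolve_right fun hneg => ?_
  have hcone : -x ∈ AddSubmonoid.closure (Set.range (simpleBasis hRS hreg)) := by
    rw [range_simpleBasis]; exact posRoots_subset_closure_simpleBase hRS.finite hneg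
  rw [Module.Basis.mem_closure_range_iff] at hcone
  obtain ⟨n, hn⟩ := hcone i
  rw [map_neg, Finsupp.neg_apply] at hn
  linarith [(Nat.cast_nonneg n : (0 : ℝ) ≤ n)]

theorem sumCoords_simpleBasis_finsuppSum (d : V →₀ ℕ) (hd : ↑d.support ⊆ simpleBase Rad v) :
    (simpleBasis hRS hreg).sumCoords (d.sum fun β n => n • β) = (d.sum fun _ n => n : ℕ) :=
  map_finsuppSum_nsmul_of_map_eq_one (simpleBasis hRS hreg).sumCoords.toAddMonoidHom d
    fun β hβ => by simpa using (simpleBasis hRS hreg).sumCoords_self_apply (i := ⟨β, hd hβ⟩)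

end Simple

section Involution

variable {t : V ≃ₗᵢ[ℝ] V}

def imaginarySimpleRoots (Rad : Set V) (t : V ≃ₗᵢ[ℝ] V) (v : V) : Set V :=
  {β | β ∈ simpleBase Rad v ∧ t β = -β}

theorem IsInvolution.apply_mem (ht : IsInvolution Rad t) {x : V} (hx : x ∈ Rad) : t x ∈ Rad :=
  ht.maps ▸ Set.mem_image_of_mem t hx

theorem IsSChamber.apply_mem_posRoots (ht : IsInvolution Rad t) (hv : IsSChamber Rad t v)
    {β : V} (hβ : β ∈ posRoots Rad v) (hne : t β ≠ -β) : t β ∈ posRoots Rad v := by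
  refine ⟨ht.apply_mem hβ.1, ?_⟩
  by_cases heq : t β = β
  · rw [heq]; exact hβ.2
  · exact pos_of_mul_pos_right (hv.2 β hβ.1 heq hne) hβ.2.le

theorem apply_eq_neg_of_mem_span_imaginarySimpleRoots {x : V}
    (hx : x ∈ Submodule.span ℝ (imaginarySimpleRoots Rad t v)) : t x = -x :=
  LinearMap.eqOn_span' (f := t.toLinearMap) (g := -LinearMap.id) (fun _ hβ => hβ.2) hx

theorem apply_notMem_span_imaginarySimpleRoots (ht : IsInvolution Rad t) {x : V}
    (hx : t x ≠ -x) : t x ∉ Submodule.span ℝ (imaginarySimpleRoots Rad t v) := fun hmem => by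
  have h := apply_eq_neg_of_mem_span_imaginarySimpleRoots hmem
  rw [ht.invol] at h
  exact hx (neg_eq_iff_eq_neg.mp h.symm)

variable (hRS : IsRootSystem Rad) (hreg : IsRegular Rad v)
include hRS hreg

theorem simpleBasis_image_imaginary :
    simpleBasis hRS hreg '' {i | t i = -i} = imaginarySimpleRoots Rad t v := by
  ext β
  simp [imaginarySimpleRoots, and_comm]

theorem mem_closure_imaginarySimpleRoots_iff {x : V} :
    x ∈ AddSubmonoid.closure (imaginarySimpleRoots Rad t v) ↔
      x ∈ AddSubmonoid.closure (simpleBase Rad v) ∧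
        x ∈ Submodule.span ℝ (imaginarySimpleRoots Rad t v) := by
  have h := (simpleBasis hRS hreg).mem_closure_image_iff (x := x) (s := {i | t i = -i})
  rwa [← Module.Basis.mem_closure_range_iff, range_simpleBasis, simpleBasis_image_imaginary] at h

theorem eq_of_sub_mem_span_imaginarySimpleRoots {α β : V} (hα : α ∈ simpleBase Rad v)
    (hβ : β ∈ simpleBase Rad v) (hαim : α ∉ imaginarySimpleRoots Rad t v)
    (h : α - β ∈ Submodule.span ℝ (imaginarySimpleRoots Rad t v)) : α = β := by
  rw [← simpleBasis_image_imaginary hRS hreg] at h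
  have h' := (simpleBasis hRS hreg).eq_of_sub_mem_span_image (i := ⟨α, hα⟩) (j := ⟨β, hβ⟩)
    (fun h => hαim ⟨hα, h⟩) (by simpa using h)
  exact congrArg Subtype.val h'

end Involution

section SChamber

variable {t : V ≃ₗᵢ[ℝ] V} (hRS : IsRootSystem Rad)
include hRS

theorem sub_mem_closure_simpleBase_of_repr_ne_zero (hreg : IsRegular Rad v) {x : V}
    (hx : x ∈ AddSubmonoid.closure (simpleBase Rad v)) {i : simpleBase Rad v}
    (hi : (simpleBasis hRS hreg).repr x i ≠ 0) :
    x - i ∈ AddSubmonoid.closure (simpleBase Rad v) := by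
  have h := (simpleBasis hRS hreg).sub_mem_closure_range_of_repr_ne_zero
    (by rwa [range_simpleBasis]) hi
  rwa [range_simpleBasis, simpleBasis_apply] at h

open Classical in
noncomputable def complexHeight (hreg : IsRegular Rad v) (t : V ≃ₗᵢ[ℝ] V) : V →ₗ[ℝ] ℝ :=
  (simpleBasis hRS hreg).constr ℝ fun i => if t i = -i then 0 else 1

theorem complexHeight_simple_of_imaginary (hreg : IsRegular Rad v) {i : simpleBase Rad v}
    (hi : t i = -i) : complexHeight hRS hreg t i = 0 := by
  rw [complexHeight, ← simpleBasis_apply hRS hreg i, Module.Basis.constr_basis, if_pos hi]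

theorem complexHeight_simple_of_complex (hreg : IsRegular Rad v) {i : simpleBase Rad v}
    (hi : t i ≠ -i) : complexHeight hRS hreg t i = 1 := by
  rw [complexHeight, ← simpleBasis_apply hRS hreg i, Module.Basis.constr_basis, if_neg hi]

theorem one_le_complexHeight (hreg : IsRegular Rad v) {x : V}
    (hx : x ∈ AddSubmonoid.closure (simpleBase Rad v))
    (hxs : x ∉ Submodule.span ℝ (imaginarySimpleRoots Rad t v)) :
    1 ≤ complexHeight hRS hreg t x := by
  classical
  set b := simpleBasis hRS hreg
  rw [← range_simpleBasis hRS hreg] at hx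
  rw [← simpleBasis_image_imaginary hRS hreg, b.mem_span_image, Set.not_subset] at hxs
  obtain ⟨i, hi, his⟩ := hxs
  have hf : (0 : simpleBase Rad v → ℝ) ≤ fun i : simpleBase Rad v => if t i = -i then 0 else 1 :=
    fun i => by by_cases hi : t i = -i <;> simp [hi]
  have hi' : t i ≠ -i := his
  simpa [complexHeight, hi'] using b.le_constr_of_repr_ne_zero hf hx (Finsupp.mem_support_iff.mp hi)

/-- This is where the S-chamber condition enters: `t` maps the complex simple roots to positive
roots outside the span of the imaginary ones. -/
theorem complexHeight_le_apply (ht : IsInvolution Rad t) (hv : IsSChamber Rad t v) {x : V}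
    (hx : x ∈ AddSubmonoid.closure (simpleBase Rad v)) :
    complexHeight hRS hv.1 t x ≤ complexHeight hRS hv.1 t (t x) := by
  classical
  set F := complexHeight hRS hv.1 t
  have hle : (fun i : simpleBase Rad v => if t i = -i then (0 : ℝ) else 1) ≤
      fun i => F (t (simpleBasis hRS hv.1 i)) := by
    intro i
    simp only [simpleBasis_apply]
    by_cases hi : t i = -i
    · simp [hi, F, complexHeight_simple_of_imaginary]
    · rw [if_neg hi]
      exact one_le_complexHeight hRS hv.1
        (posRoots_subset_closure_simpleBase hRS.finite (hv.apply_mem_posRoots ht i.2.1 hi))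
        (apply_notMem_span_imaginarySimpleRoots ht hi)
  calc F x ≤ (simpleBasis hRS hv.1).constr ℝ (fun i => F (t (simpleBasis hRS hv.1 i))) x :=
        (simpleBasis hRS hv.1).constr_mono_of_mem_closure_range hle (by rwa [range_simpleBasis])
    _ = F (t x) := congrArg (· x) ((simpleBasis hRS hv.1).constr_self ℝ (F ∘ₗ t.toLinearMap))

theorem exists_simpleBase_sub_mem_closure_imaginarySimpleRoots (ht : IsInvolution Rad t)
    (hv : IsSChamber Rad t v) {α : V} (hα : α ∈ simpleBase Rad v) (hα_ne : t α ≠ -α) :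
    ∃ α' ∈ simpleBase Rad v, α' ∉ imaginarySimpleRoots Rad t v ∧
      t α - α' ∈ AddSubmonoid.closure (imaginarySimpleRoots Rad t v) := by
  set F := complexHeight hRS hv.1 t
  have htα := posRoots_subset_closure_simpleBase hRS.finite (hv.apply_mem_posRoots ht hα.1 hα_ne)
  have hF_le : F (t α) ≤ 1 := by
    have h := complexHeight_le_apply hRS ht hv htα
    rwa [ht.invol, show α = (⟨α, hα⟩ : simpleBase Rad v) from rfl,
      complexHeight_simple_of_complex hRS hv.1 hα_ne] at h
  have hspan := apply_notMem_span_imaginarySimpleRoots (v := v) ht hα_ne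
  rw [← simpleBasis_image_imaginary hRS hv.1, Module.Basis.mem_span_image, Set.not_subset] at hspan
  obtain ⟨i₀, hi₀, hi₀s⟩ := hspan
  have hsub := sub_mem_closure_simpleBase_of_repr_ne_zero hRS hv.1 htα
    (Finsupp.mem_support_iff.mp hi₀)
  refine ⟨i₀, i₀.2, fun h => hi₀s h.2,
    (mem_closure_imaginarySimpleRoots_iff hRS hv.1).mpr ⟨hsub, by_contra fun h => ?_⟩⟩
  -- otherwise `F (t α - α') ≥ 1`, although `F (t α) ≤ 1 = F α'`
  have h1 := one_le_complexHeight hRS hv.1 hsub h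
  rw [map_sub, complexHeight_simple_of_complex hRS hv.1 hi₀s] at h1
  linarith

theorem sub_sub_mem_closure_simpleBase (ht : IsInvolution Rad t) (hreg : IsRegular Rad v)
    {α α' γ : V} (hα' : α' ∈ simpleBase Rad v) (hα'im : α' ∉ imaginarySimpleRoots Rad t v)
    (hα'' : t α - α' ∈ Submodule.span ℝ (imaginarySimpleRoots Rad t v))
    (hγ : γ ∈ Submodule.span ℝ (imaginarySimpleRoots Rad t v)) (hαγ : α + γ ∈ Rad) :
    t α - α' - γ ∈ AddSubmonoid.closure (simpleBase Rad v) := by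
  set b := simpleBasis hRS hreg
  set i₀ : simpleBase Rad v := ⟨α', hα'⟩
  have hi₀ : i₀ ∉ {i : simpleBase Rad v | t i = -i} := fun h => hα'im ⟨hα', h⟩
  have hroot : t α - γ ∈ Rad := by
    have h := ht.apply_mem hαγ
    rwa [map_add, apply_eq_neg_of_mem_span_imaginarySimpleRoots hγ, ← sub_eq_add_neg] at h
  rw [← simpleBasis_image_imaginary hRS hreg] at hα'' hγ
  -- `t α - γ` is a root whose `α'`-coefficient is `1`, hence a positive root
  have hcoeff : b.repr (t α - γ) i₀ = 1 := by
    have h : t α - γ = (t α - α') - γ + b i₀ := by rw [simpleBasis_apply]; abel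
    rw [h, map_add, map_sub, Finsupp.add_apply, Finsupp.sub_apply,
      b.repr_eq_zero_of_mem_span_image hα'' hi₀, b.repr_eq_zero_of_mem_span_image hγ hi₀]
    simp
  have hpos := mem_posRoots_of_repr_pos hRS hreg hroot (hcoeff ▸ one_pos)
  have h := sub_mem_closure_simpleBase_of_repr_ne_zero hRS hreg
    (posRoots_subset_closure_simpleBase hRS.finite hpos) (hcoeff ▸ one_ne_zero)
  convert h using 1
  abel

end SChamber

theorem stmt9_general {V : Type*} [NormedAddCommGroup V] [InnerProductSpace ℝ V]
    (Rad : Set V) (hRS : IsRootSystem Rad)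
    (t : V ≃ₗᵢ[ℝ] V) (ht : IsInvolution Rad t) (v : V) (hv : IsSChamber Rad t v)
    (α : V) (hα : α ∈ simpleBase Rad v) (h2 : t α ≠ -α) :
    ∃ α' ∈ simpleBase Rad v,
      t α - α' ∈ AddSubgroup.closure {β | β ∈ simpleBase Rad v ∧ t β = -β} ∧
      (∀ α₂ ∈ simpleBase Rad v,
        t α - α₂ ∈ AddSubgroup.closure {β | β ∈ simpleBase Rad v ∧ t β = -β} → α₂ = α') ∧
      t α - α' ∈ AddSubmonoid.closure {β | β ∈ simpleBase Rad v ∧ t β = -β} ∧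
      α + (t α - α') ∈ Rad ∧
      ∀ γ ∈ AddSubmonoid.closure {β | β ∈ simpleBase Rad v ∧ t β = -β},
        α + γ ∈ Rad → γ ≠ t α - α' →
          ∀ c c'' : V →₀ ℕ,
            (c.support : Set V) ⊆ {β | β ∈ simpleBase Rad v ∧ t β = -β} →
            (c''.support : Set V) ⊆ {β | β ∈ simpleBase Rad v ∧ t β = -β} →
            (c.sum fun b n => n • b) = γ → (c''.sum fun b n => n • b) = t α - α' →
            (c.sum fun _ n => n) < (c''.sum fun _ n => n) := by
  obtain ⟨α', hα', hα'im, hα''⟩ :=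
    exists_simpleBase_sub_mem_closure_imaginarySimpleRoots hRS ht hv hα h2
  have hα''span := Submodule.closure_subset_span (R := ℝ) hα''
  refine ⟨α', hα', AddSubmonoid.closure_le.mpr AddSubgroup.subset_closure hα'',
    fun α₂ hα₂ h => ?_, hα'', ?_, fun γ hγ hαγ hne c c'' hc hc'' hcγ hc''α => ?_⟩
  · have h₂ := AddSubgroup.closure_le
      (K := (Submodule.span ℝ (imaginarySimpleRoots Rad t v)).toAddSubgroup)
      |>.mpr Submodule.subset_span h
    refine (eq_of_sub_mem_span_imaginarySimpleRoots hRS hv.1 hα' hα₂ hα'im ?_).symm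
    simpa using sub_mem h₂ hα''span
  · -- `t α' = α + (t α - α')`, since `t` negates `t α - α'`
    have h := apply_eq_neg_of_mem_span_imaginarySimpleRoots hα''span
    rw [map_sub, ht.invol] at h
    rw [← neg_neg (t α - α'), ← h, ← sub_eq_add_neg, sub_sub_cancel]
    exact ht.apply_mem hα'.1.1
  · have h := (simpleBasis hRS hv.1).one_le_sumCoords_of_mem_closure_range
      (by rw [range_simpleBasis]
          exact sub_sub_mem_closure_simpleBase hRS ht hv.1 hα' hα'im hα''span
            (Submodule.closure_subset_span (R := ℝ) hγ) hαγ)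
      (sub_ne_zero.mpr hne.symm)
    rw [map_sub, ← hcγ, ← hc''α, sumCoords_simpleBasis_finsuppSum _ _ c fun _ h => (hc h).1,
      sumCoords_simpleBasis_finsuppSum _ _ c'' fun _ h => (hc'' h).1] at h
    exact_mod_cast (by linarith : ((c.sum fun _ n => n : ℕ) : ℝ) < (c''.sum fun _ n => n : ℕ))

/-- for a complex simple root `α` in an S-chamber for `t`, `t α` differs from
a unique simple root `α'` by an element `α'' = t α - α'` of the ℤ-span of the imaginary
simple roots; moreover `α''` lies in the ℕ-span, `α + α''` is a root, and `α''` is the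
unique element of maximal coefficient sum among those `γ` in the ℕ-span of the imaginary
simple roots with `α + γ` a root. -/
theorem stmt9 {V : Type*} [NormedAddCommGroup V] [InnerProductSpace ℝ V]
    [FiniteDimensional ℝ V] (Rad : Set V) (hRS : IsRootSystem Rad)
    (t : V ≃ₗᵢ[ℝ] V) (ht : IsInvolution Rad t) (v : V) (hv : IsSChamber Rad t v)
    (α : V) (hα : α ∈ simpleBase Rad v) (h1 : t α ≠ α) (h2 : t α ≠ -α) :
    ∃ α' ∈ simpleBase Rad v,
      t α - α' ∈ AddSubgroup.closure {β | β ∈ simpleBase Rad v ∧ t β = -β} ∧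
      (∀ α₂ ∈ simpleBase Rad v,
        t α - α₂ ∈ AddSubgroup.closure {β | β ∈ simpleBase Rad v ∧ t β = -β} → α₂ = α') ∧
      t α - α' ∈ AddSubmonoid.closure {β | β ∈ simpleBase Rad v ∧ t β = -β} ∧
      α + (t α - α') ∈ Rad ∧
      ∀ γ ∈ AddSubmonoid.closure {β | β ∈ simpleBase Rad v ∧ t β = -β},
        α + γ ∈ Rad → γ ≠ t α - α' →
          ∀ c c'' : V →₀ ℕ,
            (c.support : Set V) ⊆ {β | β ∈ simpleBase Rad v ∧ t β = -β} →
            (c''.support : Set V) ⊆ {β | β ∈ simpleBase Rad v ∧ t β = -β} →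
            (c.sum fun b n => n • b) = γ → (c''.sum fun b n => n • b) = t α - α' →
            (c.sum fun _ n => n) < (c''.sum fun _ n => n) :=
  stmt9_general Rad hRS t ht v hv α hα h2

end PaperRS
end
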